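/- On the infinite d-regular tree T (d ≥ 3) with origin o, if all rotors initially point in direction d − 1, then every chip in an infinite succession of chips started at o eventually returns to o. That is, with this initial rotor configuration, rotor-router walk is recurrent: no chip ever escapes to infinity. -/

import Mathlib

/-!
The infinite `d`-regular tree with rotor-router walk.

Vertices are encoded as `Option (Fin d × List (Fin (d - 1)))`: `none` is the
origin `o`, and `some (b, w)` is the vertex of the `b`-th principal branch
reached from the root of that branch by the path `w` (so `|some (b, w)| =
w.length + 1`).

Every vertex carries a rotor with `d` directions indexed by `ZMod d`, cycling
in increasing order.  At the origin the value `v` points to the root of the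
`(v+1)`-st principal branch (directions `1, …, d` are indexed by values
`0, …, d - 1`).  At a non-origin vertex, a value `v < d - 1` points to the
child obtained by appending `v`, and the value `d - 1` (direction `d`) points
to the parent.  A rotor-router step first increments the rotor at the chip's
location, then moves the chip in the new direction.
-/

/-- Vertices of the infinite `d`-regular tree. -/
abbrev TV (d : ℕ) := Option (Fin d × List (Fin (d - 1)))

/-- Rotor configurations on the infinite `d`-regular tree. -/
abbrev TConf (d : ℕ) := TV d → ZMod d

/-- One rotor-router step: increment the rotor at the chip's location, then
move the chip in the new direction. -/
def tstep (d : ℕ) (p : TConf d × TV d) : TConf d × TV d :=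
  match p with
  | (C, none) =>
    let r := C none + 1
    let C' := Function.update C none r
    if h : r.val < d then (C', some (⟨r.val, h⟩, [])) else (C', none)
  | (C, some (b, w)) =>
    let r := C (some (b, w)) + 1
    let C' := Function.update C (some (b, w)) r
    if h : r.val < d - 1 then (C', some (b, w ++ [⟨r.val, h⟩]))
    else (C', if w = [] then none else some (b, w.dropLast))

/-- The number of edges in the path from the origin to a vertex. -/
def depth (d : ℕ) : TV d → ℕ
  | none => 0
  | some (_, w) => w.length + 1

/-- The same step, but absorbing at the origin: used to track a chip from the
moment it has left the origin until it possibly returns there. -/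
def tstepAbs (d : ℕ) (p : TConf d × TV d) : TConf d × TV d :=
  if p.2 = none then p else tstep d p

/-- The trajectory of a single chip started at the origin with rotor
configuration `C`: `traj d C k` is the state after `k + 1` rotor-router
steps, the walk being stopped (absorbed) if the chip returns to the origin. -/
def traj (d : ℕ) (C : TConf d) (k : ℕ) : TConf d × TV d :=
  (tstepAbs d)^[k] (tstep d (C, none))

/-- The chip started at the origin eventually returns to the origin
(otherwise it escapes to infinity, visiting each vertex finitely often). -/
def chipReturns (d : ℕ) (C : TConf d) : Prop := ∃ k, (traj d C k).2 = none

/-- The rotor configuration left behind by a chip started at the origin: the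
rotor at each vertex takes its eventual value along the trajectory (if the
chip returns this is the configuration upon return; if the chip escapes to
infinity it visits each vertex only finitely often, so each rotor is
eventually constant and the configuration is well-defined). -/
noncomputable def nextConf (d : ℕ) (C : TConf d) : TConf d := fun v =>
  haveI := Classical.dec (∃ c : ZMod d, ∃ K : ℕ, ∀ k, K ≤ k → (traj d C k).1 v = c)
  if h : ∃ c : ZMod d, ∃ K : ℕ, ∀ k, K ≤ k → (traj d C k).1 v = c then h.choose
  else C v

/-- The rotor configuration seen by the `(j+1)`-st chip, when chips are
started at the origin one at a time, beginning from the configuration `C0`. -/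
noncomputable def confSeq (d : ℕ) (C0 : TConf d) : ℕ → TConf d
  | 0 => C0
  | j + 1 => nextConf d (confSeq d C0 j)

/-- The `(j+1)`-st chip (`j = 0, 1, 2, …`) escapes to infinity. -/
def escapes (d : ℕ) (C0 : TConf d) (j : ℕ) : Prop :=
  ¬ chipReturns d (confSeq d C0 j)


/-!
Call a subtree *at level `m`* when every rotor at relative depth `< m` points to the parent and
every deeper rotor is in its initial position `d − 1`. A chip entering a subtree at level `m`
from its parent comes back to the parent after finitely many steps, leaving the subtree at
level `m + 1` and every other rotor untouched: at level `0` it bounces straight back, and at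
level `m + 1` the root rotor sends it once into each child subtree (at level `m`, hence raised
to level `m + 1` by induction) before pointing to the parent again. Initially every principal
branch is at level `0`, so after each chip every branch is still at some level, and each chip
returns to the origin.
-/

namespace RotorTree

variable {d : ℕ}

lemma natCast_pred_eq_neg_one (hd : 1 ≤ d) : ((d - 1 : ℕ) : ZMod d) = -1 := by
  rw [eq_neg_iff_add_eq_zero, ← Nat.cast_add_one, Nat.sub_add_cancel hd, ZMod.natCast_self]

lemma natCast_sub_two_add_one (hd : 2 ≤ d) : ((d - 2 : ℕ) : ZMod d) + 1 = -1 := by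
  rw [← Nat.cast_add_one, show d - 2 + 1 = d - 1 by omega, natCast_pred_eq_neg_one (by omega)]

lemma not_val_neg_one_lt_pred : ¬ (-1 : ZMod d).val < d - 1 := by
  cases d with
  | zero => decide
  | succ n => rw [ZMod.val_neg_one]; omega

def parent (b : Fin d) (w : List (Fin (d - 1))) : TV d :=
  if w = [] then none else some (b, w.dropLast)

@[simp]
lemma parent_append_singleton (b : Fin d) (w : List (Fin (d - 1))) (c : Fin (d - 1)) :
    parent b (w ++ [c]) = some (b, w) := by
  simp [parent]

lemma tstepAbs_of_rotor_eq_neg_one (C : TConf d) (b : Fin d) (w : List (Fin (d - 1)))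
    (h : C (some (b, w)) + 1 = -1) :
    tstepAbs d (C, some (b, w)) = (Function.update C (some (b, w)) (-1), parent b w) := by
  simp only [tstepAbs, tstep, h, reduceCtorEq, if_false, dif_neg not_val_neg_one_lt_pred, parent]

lemma tstepAbs_of_rotor_eq_natCast (C : TConf d) (b : Fin d) (w : List (Fin (d - 1)))
    {c : ℕ} (hc : c < d - 1) (h : C (some (b, w)) + 1 = c) :
    tstepAbs d (C, some (b, w)) =
      (Function.update C (some (b, w)) c, some (b, w ++ [⟨c, hc⟩])) := by
  have hval : (c : ZMod d).val = c := ZMod.val_cast_of_lt (by omega)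
  simp only [tstepAbs, tstep, h, reduceCtorEq, if_false, hval, dif_pos hc]

lemma tstep_origin [NeZero d] (C : TConf d) :
    ∃ b, tstep d (C, none) = (Function.update C none (C none + 1), some (b, [])) :=
  ⟨⟨(C none + 1).val, ZMod.val_lt _⟩, by simp only [tstep, dif_pos (ZMod.val_lt _)]⟩

def subtree (b : Fin d) (w : List (Fin (d - 1))) : Set (TV d) :=
  {v | ∃ w', w <+: w' ∧ v = some (b, w')}

section subtree

variable {b : Fin d} {w : List (Fin (d - 1))}

lemma mem_subtree_self : some (b, w) ∈ subtree b w := ⟨w, List.prefix_rfl, rfl⟩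

lemma none_notMem_subtree : none ∉ subtree b w := by
  rintro ⟨w', -, h⟩
  cases h

lemma subtree_append_subset (u : List (Fin (d - 1))) : subtree b (w ++ u) ⊆ subtree b w := by
  rintro _ ⟨w', hw', rfl⟩
  exact ⟨w', (List.prefix_append w u).trans hw', rfl⟩

lemma self_notMem_subtree_append (c : Fin (d - 1)) : some (b, w) ∉ subtree b (w ++ [c]) := by
  rintro ⟨w', hw', h⟩
  cases h
  simpa using hw'.length_le

lemma disjoint_subtree_append {c c' : Fin (d - 1)} (hc : c ≠ c') :
    Disjoint (subtree b (w ++ [c])) (subtree b (w ++ [c'])) := by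
  rw [Set.disjoint_left]
  rintro _ ⟨w', ⟨u, rfl⟩, rfl⟩ ⟨w'', ⟨u', hu⟩, h⟩
  cases h
  simp only [List.append_assoc, List.append_cancel_left_eq, List.singleton_append,
    List.cons.injEq] at hu
  exact hc hu.1.symm

lemma disjoint_subtree_of_ne {b' : Fin d} (hb : b ≠ b') (w' : List (Fin (d - 1))) :
    Disjoint (subtree b w) (subtree b' w') := by
  rw [Set.disjoint_left]
  rintro _ ⟨_, -, rfl⟩ ⟨_, -, h⟩
  cases h
  exact hb rfl

lemma exists_append_singleton_prefix_of_prefix {w' : List (Fin (d - 1))} (h : w <+: w')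
    (hne : w' ≠ w) : ∃ c, w ++ [c] <+: w' := by
  obtain ⟨_ | ⟨c, u⟩, rfl⟩ := h
  · simp at hne
  · exact ⟨c, u, by simp⟩

end subtree

-- `-1` encodes direction `d` (the parent) and `d - 2` the initial direction `d - 1`.
def levelRotor (d m k : ℕ) : ZMod d := if k < m then -1 else ((d - 2 : ℕ) : ZMod d)

lemma levelRotor_succ (m k : ℕ) : levelRotor d m (k + 1) = levelRotor d (m - 1) k := by
  simp only [levelRotor]
  congr 1
  exact propext (by omega)

def IsLevel (C : TConf d) (b : Fin d) (w : List (Fin (d - 1))) (m : ℕ) : Prop :=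
  ∀ w', w <+: w' → C (some (b, w')) = levelRotor d m (w'.length - w.length)

section level

variable {C C' : TConf d} {b : Fin d} {w : List (Fin (d - 1))} {m : ℕ}

lemma IsLevel.congr (h : IsLevel C b w m) (hC : Set.EqOn C' C (subtree b w)) :
    IsLevel C' b w m := fun w' hw' => (hC ⟨w', hw', rfl⟩).trans (h w' hw')

-- Truncated subtraction: the children of a subtree at level `0` are at level `0`.
lemma isLevel_iff : IsLevel C b w m ↔
    C (some (b, w)) = levelRotor d m 0 ∧ ∀ c, IsLevel C b (w ++ [c]) (m - 1) := by
  constructor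
  · intro h
    refine ⟨by simpa using h w List.prefix_rfl, fun c w' hw' => ?_⟩
    have hlen := hw'.length_le
    simp only [List.length_append, List.length_singleton] at hlen ⊢
    rw [h w' ((List.prefix_append w [c]).trans hw'), ← levelRotor_succ]
    congr 1
    omega
  · rintro ⟨hroot, hch⟩ w' hw'
    rcases eq_or_ne w' w with rfl | hne
    · simpa using hroot
    obtain ⟨c, hc⟩ := exists_append_singleton_prefix_of_prefix hw' hne
    have hlen := hc.length_le
    simp only [List.length_append, List.length_singleton] at hlen
    rw [hch c w' hc, List.length_append, List.length_singleton, ← levelRotor_succ]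
    congr 1
    omega

end level

def ExitsAtLevel (C : TConf d) (b : Fin d) (w : List (Fin (d - 1))) (m : ℕ) : Prop :=
  ∃ n C', (tstepAbs d)^[n] (C, some (b, w)) = (C', parent b w) ∧
    IsLevel C' b w m ∧ Set.EqOn C' C (subtree b w)ᶜ

def ExcursionRaisesLevel (d m : ℕ) : Prop :=
  ∀ (C : TConf d) (b : Fin d) (w : List (Fin (d - 1))),
    IsLevel C b w m → ExitsAtLevel C b w (m + 1)

section excursion

variable {C : TConf d} {b : Fin d} {w : List (Fin (d - 1))} {m : ℕ}

lemma update_eqOn_compl_subtree (x : ZMod d) :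
    Set.EqOn (Function.update C (some (b, w)) x) C (subtree b w)ᶜ := fun v hv =>
  Function.update_of_ne (by rintro rfl; exact hv mem_subtree_self) ..

lemma update_eqOn_subtree_append (x : ZMod d) (c : Fin (d - 1)) :
    Set.EqOn (Function.update C (some (b, w)) x) C (subtree b (w ++ [c])) := fun _ hv =>
  Function.update_of_ne (ne_of_mem_of_not_mem hv (self_notMem_subtree_append c)) ..

lemma exitsAtLevel_of_rotor_add_one_eq_neg_one (hroot : C (some (b, w)) + 1 = -1)
    (hch : ∀ c, IsLevel C b (w ++ [c]) m) : ExitsAtLevel C b w (m + 1) := by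
  refine ⟨1, Function.update C (some (b, w)) (-1),
    tstepAbs_of_rotor_eq_neg_one C b w hroot, ?_, ?_⟩
  · exact isLevel_iff.2 ⟨by simp [levelRotor],
      fun c => (hch c).congr (update_eqOn_subtree_append _ c)⟩
  · exact update_eqOn_compl_subtree _

-- The chip is at the root after exploring the children `0, …, i - 1`; `t` children remain.
lemma exitsAtLevel_of_children (hd : 1 ≤ d) (IH : ExcursionRaisesLevel d m) (t : ℕ) :
    ∀ (i : ℕ) (C : TConf d), i + t = d - 1 → C (some (b, w)) + 1 = i →
      (∀ c : Fin (d - 1), IsLevel C b (w ++ [c]) (if (c : ℕ) < i then m + 1 else m)) →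
      ExitsAtLevel C b w (m + 2) := by
  induction t with
  | zero =>
    intro i C hi hroot hch
    refine exitsAtLevel_of_rotor_add_one_eq_neg_one ?_ fun c => ?_
    · rw [hroot, show i = d - 1 by omega, natCast_pred_eq_neg_one hd]
    · simpa [show (c : ℕ) < i by omega] using hch c
  | succ t ih =>
    intro i C hi hroot hch
    have hi' : i < d - 1 := by omega
    set c : Fin (d - 1) := ⟨i, hi'⟩
    set C₁ := Function.update C (some (b, w)) i with hC₁def
    have hstep : tstepAbs d (C, some (b, w)) = (C₁, some (b, w ++ [c])) :=
      tstepAbs_of_rotor_eq_natCast C b w hi' hroot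
    have hC₁ : Set.EqOn C₁ C (subtree b w)ᶜ := update_eqOn_compl_subtree _
    have hC₁' (c' : Fin (d - 1)) : Set.EqOn C₁ C (subtree b (w ++ [c'])) :=
      update_eqOn_subtree_append _ c'
    obtain ⟨n₁, C₂, hrun₁, hlevel₂, hC₂⟩ :=
      IH C₁ b (w ++ [c]) ((by simpa [c] using hch c : IsLevel C b (w ++ [c]) m).congr (hC₁' c))
    rw [parent_append_singleton] at hrun₁
    have hroot₂ : C₂ (some (b, w)) + 1 = (i + 1 : ℕ) := by
      rw [hC₂ (self_notMem_subtree_append c), hC₁def, Function.update_self]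
      push_cast
      ring
    have hch₂ (c' : Fin (d - 1)) :
        IsLevel C₂ b (w ++ [c']) (if (c' : ℕ) < i + 1 then m + 1 else m) := by
      rcases eq_or_ne c' c with rfl | hne
      · simpa [c] using hlevel₂
      have hc' : (c' : ℕ) ≠ i := fun h => hne (Fin.ext h)
      have hdisj : Set.EqOn C₂ C (subtree b (w ++ [c'])) := fun v hv =>
        (hC₂ (Set.disjoint_left.1 (disjoint_subtree_append hne) hv)).trans (hC₁' c' hv)
      simpa only [show (c' : ℕ) < i + 1 ↔ (c' : ℕ) < i by omega] using (hch c').congr hdisj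
    obtain ⟨n₂, C₃, hrun₂, hlevel₃, hC₃⟩ := ih (i + 1) C₂ (by omega) hroot₂ hch₂
    refine ⟨n₂ + n₁ + 1, C₃, ?_, hlevel₃, fun v hv => ?_⟩
    · rw [Function.iterate_add_apply, Function.iterate_add_apply, Function.iterate_one, hstep,
        hrun₁, hrun₂]
    · exact (hC₃ hv).trans ((hC₂ fun h => hv (subtree_append_subset [c] h)).trans (hC₁ hv))

end excursion

lemma excursionRaisesLevel (hd : 2 ≤ d) : ∀ m, ExcursionRaisesLevel d m
  | 0 => fun C b w h => by
    obtain ⟨hroot, hch⟩ := isLevel_iff.1 h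
    refine exitsAtLevel_of_rotor_add_one_eq_neg_one ?_ hch
    rw [hroot, levelRotor, if_neg (lt_irrefl 0), natCast_sub_two_add_one hd]
  | m + 1 => fun C b w h => by
    obtain ⟨hroot, hch⟩ := isLevel_iff.1 h
    refine exitsAtLevel_of_children (by omega) (excursionRaisesLevel hd m) (d - 1) 0 C
      (by omega) ?_ (by simpa using hch)
    simp [hroot, levelRotor]

section chip

variable {C C' : TConf d} {K : ℕ}

lemma traj_eq_of_le (hK : traj d C K = (C', none)) {k : ℕ} (hk : K ≤ k) :
    traj d C k = (C', none) := by
  obtain ⟨t, rfl⟩ := Nat.exists_eq_add_of_le hk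
  rw [traj, add_comm, Function.iterate_add_apply, ← traj, hK]
  exact Function.iterate_fixed (by simp [tstepAbs]) t

lemma nextConf_eq_of_traj_eq (hK : traj d C K = (C', none)) : nextConf d C = C' := by
  funext v
  have hex : ∃ c, ∃ K, ∀ k, K ≤ k → (traj d C k).1 v = c :=
    ⟨C' v, K, fun k hk => by rw [traj_eq_of_le hK hk]⟩
  rw [nextConf, dif_pos hex]
  obtain ⟨K', hK'⟩ := hex.choose_spec
  rw [← hK' (max K K') (le_max_right _ _), traj_eq_of_le hK (le_max_left _ _)]

def IsLeveled (C : TConf d) : Prop := ∃ m : Fin d → ℕ, ∀ b, IsLevel C b [] (m b)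

lemma IsLeveled.chipReturns_and_nextConf (hd : 2 ≤ d) (hC : IsLeveled C) :
    chipReturns d C ∧ IsLeveled (nextConf d C) := by
  have : NeZero d := ⟨by omega⟩
  obtain ⟨m, hm⟩ := hC
  obtain ⟨b₀, hstep⟩ := tstep_origin C
  set C₁ := Function.update C none (C none + 1)
  have hC₁ (b : Fin d) : Set.EqOn C₁ C (subtree b []) := fun _ hv =>
    Function.update_of_ne (ne_of_mem_of_not_mem hv none_notMem_subtree) ..
  obtain ⟨n, C', hrun, hlevel, hC'⟩ :=
    excursionRaisesLevel hd (m b₀) C₁ b₀ [] ((hm b₀).congr (hC₁ b₀))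
  have hK : traj d C n = (C', none) := by
    rw [traj, hstep, hrun]
    rfl
  refine ⟨⟨n, by rw [hK]⟩, Function.update m b₀ (m b₀ + 1), fun b => ?_⟩
  rw [nextConf_eq_of_traj_eq hK]
  rcases eq_or_ne b b₀ with rfl | hb
  · simpa using hlevel
  · have hdisj : Set.EqOn C' C (subtree b []) := fun v hv =>
      (hC' (Set.disjoint_left.1 (disjoint_subtree_of_ne hb []) hv)).trans (hC₁ b hv)
    simpa [hb] using (hm b).congr hdisj

end chip

end RotorTree

/-- On the infinite `d`-regular tree (`d ≥ 3`), if all rotors initially point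
in direction `d − 1` (encoded by `d - 2 : ZMod d`), then every chip in an
infinite succession of chips started at the origin eventually returns to the
origin: rotor-router walk is recurrent. -/
theorem stmt13 (d : ℕ) (hd : 3 ≤ d) :
    ∀ j : ℕ, chipReturns d (confSeq d (fun _ => ((d - 2 : ℕ) : ZMod d)) j) := by
  have leveled (j : ℕ) :
      RotorTree.IsLeveled (confSeq d (fun _ => ((d - 2 : ℕ) : ZMod d)) j) := by
    induction j with
    | zero => exact ⟨0, fun _ _ _ => by simp [confSeq, RotorTree.levelRotor]⟩
    | succ j ih => exact (ih.chipReturns_and_nextConf (by omega)).2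
  exact fun j => ((leveled j).chipReturns_and_nextConf (by omega)).1
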